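/- arXiv:1403.5240 — 8 statements merged into one kernel-verified Lean document; each statement's English description precedes it below -/
import Mathlib

section
/- Let λ > 0 and n ≥ 2 be an integer. If (u,v) ∈ ℝ² satisfies u ≥ 0, v ≥ 0, n·u + (2n-1)·v ≤ 1 and λ·u² + v = max(λ/n², 1/(2n-1)), then (u,v) = (0, 1/(2n-1)) or (u,v) = (1/n, 0). -/
/-! In the coordinates `t = n u`, `s = (2n - 1) v` the triangle becomes the standard simplex
`t + s ≤ 1` and `F = (λ / n²) t² + s / (2n - 1)`. On the simplex `t² ≤ t`, so `F` is bounded by the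
linear function `(λ / n²) t + s / (2n - 1)`, whose maximum over the simplex is the larger coefficient.
Equality in `t² ≤ t` forces `t ∈ {0, 1}`, which leaves only the two vertices `(0, 1)` and `(1, 0)`. -/

theorem simplex_vertex_of_mul_sq_add_mul_eq_max {a b t s : ℝ} (ha : 0 < a) (hb : 0 < b)
    (ht : 0 ≤ t) (hs : 0 ≤ s) (hts : t + s ≤ 1) (h : a * t ^ 2 + b * s = max a b) :
    (t = 0 ∧ s = 1) ∨ (t = 1 ∧ s = 0) := by
  have hsq : t ^ 2 ≤ t := by nlinarith
  have hat : a * t ≤ max a b * t := mul_le_mul_of_nonneg_right (le_max_left a b) ht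
  have hbs : b * s ≤ max a b * s := mul_le_mul_of_nonneg_right (le_max_right a b) hs
  have hlin : max a b * (t + s) ≤ max a b :=
    mul_le_of_le_one_right (ha.le.trans (le_max_left a b)) hts
  have ht01 : t * (t - 1) = 0 := by
    have : a * (t * (t - 1)) = 0 := by nlinarith [mul_le_mul_of_nonneg_left hsq ha.le]
    simpa [ha.ne'] using this
  rcases mul_eq_zero.mp ht01 with ht0 | ht1
  · subst ht0
    have : b ≤ b * s := by linarith [le_max_right a b]
    exact Or.inl ⟨rfl, by nlinarith⟩
  · exact Or.inr ⟨by linarith, by linarith⟩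

theorem zalcman_stmt_1 (lam : ℝ) (hlam : 0 < lam) (n : ℕ) (hn : 2 ≤ n)
    (u v : ℝ) (hu : 0 ≤ u) (hv : 0 ≤ v) (huv : (n : ℝ) * u + (2 * n - 1) * v ≤ 1)
    (heq : lam * u ^ 2 + v = max (lam / (n : ℝ) ^ 2) (1 / (2 * (n : ℝ) - 1))) :
    (u = 0 ∧ v = 1 / (2 * (n : ℝ) - 1)) ∨ (u = 1 / (n : ℝ) ∧ v = 0) := by
  have hn2 : (2 : ℝ) ≤ n := by exact_mod_cast hn
  have hn0 : (0 : ℝ) < n := by linarith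
  have hm0 : (0 : ℝ) < 2 * n - 1 := by linarith
  have hF : lam / (n : ℝ) ^ 2 * (n * u) ^ 2 + 1 / (2 * (n : ℝ) - 1) * ((2 * n - 1) * v) =
      lam * u ^ 2 + v := by
    rw [one_div, inv_mul_cancel_left₀ hm0.ne']
    field_simp
  rcases simplex_vertex_of_mul_sq_add_mul_eq_max (by positivity) (by positivity)
      (by positivity) (by positivity) huv (hF.trans heq) with ⟨ht, hs⟩ | ⟨ht, hs⟩
  · left
    exact ⟨by simpa [hn0.ne'] using ht, by field_simp; linarith⟩
  · right
    exact ⟨by field_simp; linarith, by simpa [hm0.ne'] using hs⟩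
end

section
/- Let λ > 0, n ≥ 2, and let a, b be complex numbers with n·|a| + (2n-1)·|b| ≤ 1. Then |λ·a² − b| ≤ max(λ/n², 1/(2n-1)). -/
/-! With `s = n‖a‖` and `t = (2n-1)‖b‖` the hypothesis says that `(s, t)` lies in the standard
triangle `s, t ≥ 0, s + t ≤ 1`. After the triangle inequality the quantity to bound is
`(λ/n²) s² + t/(2n-1)`, which is at most the linear function `(λ/n²) s + t/(2n-1)` since `s ≤ 1`,
and a linear function on the triangle is bounded by its values at the vertices. -/

lemma mul_sq_add_mul_le_max {α β s t : ℝ} (hα : 0 ≤ α) (hs : 0 ≤ s) (ht : 0 ≤ t)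
    (hst : s + t ≤ 1) : α * s ^ 2 + β * t ≤ max α β := by
  have hs1 : s ≤ 1 := by linarith
  calc α * s ^ 2 + β * t ≤ α * s + β * t := by gcongr; nlinarith
    _ ≤ max α β * s + max α β * t := by gcongr <;> simp
    _ = max α β * (s + t) := by ring
    _ ≤ max α β := mul_le_of_le_one_right (hα.trans (le_max_left α β)) hst

lemma mul_sq_add_le_max_of_mul_add_mul_le_one {lam p q x y : ℝ} (hlam : 0 ≤ lam) (hp : 0 < p)
    (hq : 0 < q) (hx : 0 ≤ x) (hy : 0 ≤ y) (h : p * x + q * y ≤ 1) :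
    lam * x ^ 2 + y ≤ max (lam / p ^ 2) (1 / q) := by
  have key := mul_sq_add_mul_le_max (β := 1 / q) (div_nonneg hlam (sq_nonneg p))
    (mul_nonneg hp.le hx) (mul_nonneg hq.le hy) h
  convert key using 2 <;> field_simp

lemma Complex.norm_ofReal_mul_sq_sub_le {lam : ℝ} (hlam : 0 ≤ lam) (a b : ℂ) :
    ‖(lam : ℂ) * a ^ 2 - b‖ ≤ lam * ‖a‖ ^ 2 + ‖b‖ := by
  calc ‖(lam : ℂ) * a ^ 2 - b‖ ≤ ‖(lam : ℂ) * a ^ 2‖ + ‖b‖ := norm_sub_le _ _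
    _ = lam * ‖a‖ ^ 2 + ‖b‖ := by rw [norm_mul, norm_pow, Complex.norm_of_nonneg hlam]

theorem zalcman_stmt_2 (lam : ℝ) (hlam : 0 < lam) (n : ℕ) (hn : 2 ≤ n)
    (a b : ℂ) (hab : (n : ℝ) * ‖a‖ + (2 * n - 1) * ‖b‖ ≤ 1) :
    ‖(lam : ℂ) * a ^ 2 - b‖ ≤ max (lam / (n : ℝ) ^ 2) (1 / (2 * (n : ℝ) - 1)) := by
  have hn' : (2 : ℝ) ≤ n := by exact_mod_cast hn
  calc ‖(lam : ℂ) * a ^ 2 - b‖ ≤ lam * ‖a‖ ^ 2 + ‖b‖ :=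
        Complex.norm_ofReal_mul_sq_sub_le hlam.le a b
    _ ≤ max (lam / (n : ℝ) ^ 2) (1 / (2 * (n : ℝ) - 1)) :=
        mul_sq_add_le_max_of_mul_add_mul_le_one hlam.le (by linarith) (by linarith)
          (norm_nonneg a) (norm_nonneg b) hab
end

section
/- Let n ≥ 2, 0 < λ < n²/(2n-1), and let f(z) = z + Σ_{k≥2} a_k z^k satisfy Σ_{k≥2} k|a_k| ≤ 1. If |λ·a_n² − a_{2n-1}| = 1/(2n-1), then f(z) = z + (α/(2n-1))·z^{2n-1} for some complex α with |α| = 1. -/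
/-!
Write `N = 2n - 1`, `x = |a_n|` and `y = |a_N|`. The Hurwitz condition bounds every pair of
weighted coefficients, so `n x + N y ≤ 1`, while the extremal hypothesis gives
`1 ≤ N (λ x² + y)`. Together they force `n x ≤ N λ x²`; a nonzero `x` would then satisfy
`n ≤ N λ x ≤ N λ / n < n`. Hence `a_n = 0`, `N |a_N| = 1`, and this single weight exhausts the
Hurwitz budget, so every other coefficient vanishes.
-/

lemma add_le_of_tsum_le {g : ℕ → ℝ} (hg : ∀ k, 0 ≤ g k) (hs : Summable g) {c : ℝ}
    (h : ∑' k, g k ≤ c) {i j : ℕ} (hij : i ≠ j) : g i + g j ≤ c := by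
  simpa [Finset.sum_pair hij] using (hs.sum_le_tsum {i, j} fun k _ => hg k).trans h

lemma eq_zero_and_mul_eq_one_of_bounds {n N lam x y : ℝ} (hn : 0 < n) (hN : 0 < N)
    (hlam : lam * N < n ^ 2) (hx : 0 ≤ x) (hy : 0 ≤ y) (hupper : n * x + N * y ≤ 1)
    (hlower : 1 ≤ N * (lam * x ^ 2 + y)) : x = 0 ∧ N * y = 1 := by
  have hx0 : x = 0 := by
    by_contra hne
    have hxpos : 0 < x := lt_of_le_of_ne hx (Ne.symm hne)
    have hnx : n * x ≤ 1 := by nlinarith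
    have hlin : n ≤ lam * N * x := by nlinarith
    nlinarith
  subst hx0
  exact ⟨rfl, by nlinarith⟩

section Hurwitz

variable {a : ℕ → ℂ} (hsum : Summable (fun k : ℕ => ((k + 2 : ℕ) : ℝ) * ‖a (k + 2)‖))
  (hH : ∑' k : ℕ, ((k + 2 : ℕ) : ℝ) * ‖a (k + 2)‖ ≤ 1)
include hsum hH

lemma weighted_norm_add_le_one {k l : ℕ} (hk : 2 ≤ k) (hl : 2 ≤ l) (hkl : k ≠ l) :
    k * ‖a k‖ + l * ‖a l‖ ≤ 1 := by
  have := add_le_of_tsum_le (fun _ => by positivity) hsum hH (i := k - 2) (j := l - 2) (by omega)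
  rwa [Nat.sub_add_cancel hk, Nat.sub_add_cancel hl] at this

lemma eq_zero_of_weighted_norm_eq_one {l : ℕ} (hl : 2 ≤ l) (hal : l * ‖a l‖ = 1) {k : ℕ}
    (hk : 2 ≤ k) (hkl : k ≠ l) : a k = 0 := by
  have hsum_le := weighted_norm_add_le_one hsum hH hk hl hkl
  have hkpos : (0 : ℝ) < k := by exact_mod_cast (show 0 < k by omega)
  have : ‖a k‖ ≤ 0 := by nlinarith [norm_nonneg (a k)]
  exact norm_le_zero_iff.mp this

end Hurwitz

theorem zalcman_stmt_4 (n : ℕ) (hn : 2 ≤ n) (lam : ℝ)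
    (hlam : 0 < lam) (hlam' : lam < (n : ℝ) ^ 2 / (2 * n - 1)) (a : ℕ → ℂ)
    (hsum : Summable (fun k : ℕ => ((k + 2 : ℕ) : ℝ) * ‖a (k + 2)‖))
    (hH : ∑' k : ℕ, ((k + 2 : ℕ) : ℝ) * ‖a (k + 2)‖ ≤ 1)
    (heq : ‖(lam : ℂ) * (a n) ^ 2 - a (2 * n - 1)‖ = 1 / (2 * (n : ℝ) - 1)) :
    ∃ α : ℂ, ‖α‖ = 1 ∧ a (2 * n - 1) = α / (2 * n - 1) ∧
      ∀ k : ℕ, 2 ≤ k → k ≠ 2 * n - 1 → a k = 0 := by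
  have hNcast : ((2 * n - 1 : ℕ) : ℝ) = 2 * n - 1 := by
    rw [Nat.cast_sub (by omega)]; push_cast; ring
  have hN : (0 : ℝ) < 2 * n - 1 := by rw [← hNcast]; exact_mod_cast (show 0 < 2 * n - 1 by omega)
  have hupper := weighted_norm_add_le_one hsum hH hn (l := 2 * n - 1) (by omega) (by omega)
  have hlower : 1 ≤ (2 * n - 1) * (lam * ‖a n‖ ^ 2 + ‖a (2 * n - 1)‖) := by
    have := heq.symm.le.trans (norm_sub_le _ _)
    rw [norm_mul, norm_pow, Complex.norm_real, Real.norm_of_nonneg hlam.le, div_le_iff₀ hN] at this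
    linarith
  rw [hNcast] at hupper
  obtain ⟨-, hextremal⟩ := eq_zero_and_mul_eq_one_of_bounds (by positivity) hN
    ((lt_div_iff₀ hN).mp hlam') (norm_nonneg _) (norm_nonneg _) hupper hlower
  have hNC : ((2 * n - 1 : ℕ) : ℂ) = 2 * n - 1 := by exact_mod_cast congrArg Complex.ofReal hNcast
  refine ⟨(2 * n - 1) * a (2 * n - 1), ?_, ?_, ?_⟩
  · rw [norm_mul, ← hNC, Complex.norm_natCast, hNcast, hextremal]
  · rw [mul_div_cancel_left₀ _ (by rw [← hNC]; exact_mod_cast (show 2 * n - 1 ≠ 0 by omega))]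
  · exact fun k hk => eq_zero_of_weighted_norm_eq_one hsum hH (by omega) (by rwa [hNcast]) hk
end

section
/- Let n ≥ 2, λ > n²/(2n-1), and let f(z) = z + Σ_{k≥2} a_k z^k satisfy Σ_{k≥2} k|a_k| ≤ 1. If |λ·a_n² − a_{2n-1}| = λ/n², then f(z) = z + (α/n)·z^n for some complex α with |α| = 1. -/
/-! Put `x = ‖a n‖` and `y = ‖a (2n-1)‖`. The coefficient condition gives `n x + (2n-1) y ≤ 1`
and the triangle inequality gives `λ/n² ≤ λ x² + y`. Eliminating `y` and writing `t = n x ≤ 1`,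
this becomes `λ (2n-1) (1-t)(1+t) ≤ n² (1-t)`; since `λ (2n-1) > n²`, this forces `t = 1`, which
uses up the whole coefficient budget, so every other coefficient vanishes. -/

lemma mul_norm_add_mul_norm_le_tsum {a : ℕ → ℂ}
    (hsum : Summable (fun k : ℕ => ((k + 2 : ℕ) : ℝ) * ‖a (k + 2)‖))
    {k m : ℕ} (hk : 2 ≤ k) (hm : 2 ≤ m) (hkm : k ≠ m) :
    (k : ℝ) * ‖a k‖ + m * ‖a m‖ ≤ ∑' i : ℕ, ((i + 2 : ℕ) : ℝ) * ‖a (i + 2)‖ := by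
  have h := hsum.sum_le_tsum {k - 2, m - 2} (fun i _ => by positivity)
  rwa [Finset.sum_pair (by omega), Nat.sub_add_cancel hk, Nat.sub_add_cancel hm] at h

lemma mul_eq_one_of_le_mul_sq_add {N lam x y : ℝ} (hN : 1 / 2 < N)
    (hlam : N ^ 2 < lam * (2 * N - 1)) (hx : 0 ≤ x) (hy : 0 ≤ y)
    (hbudget : N * x + (2 * N - 1) * y ≤ 1) (hlow : lam / N ^ 2 ≤ lam * x ^ 2 + y) :
    N * x = 1 := by
  have hden : 0 < 2 * N - 1 := by linarith
  have hlow' : lam ≤ (lam * x ^ 2 + y) * N ^ 2 := (div_le_iff₀ (by positivity)).mp hlow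
  have hy_le : (2 * N - 1) * y ≤ 1 - N * x := by linarith
  have hfactor : (lam * (2 * N - 1) * (1 + N * x)) * (1 - N * x) ≤ N ^ 2 * (1 - N * x) := by
    nlinarith [mul_le_mul_of_nonneg_left hy_le (sq_nonneg N)]
  refine le_antisymm (by nlinarith) (not_lt.mp fun hlt => ?_)
  have hcore := le_of_mul_le_mul_right hfactor (sub_pos.mpr hlt)
  have hlam_den : 0 ≤ lam * (2 * N - 1) := by nlinarith [sq_nonneg N]
  nlinarith [mul_nonneg hlam_den (mul_nonneg (by linarith : 0 ≤ N) hx)]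

theorem zalcman_stmt_5 (n : ℕ) (hn : 2 ≤ n) (lam : ℝ)
    (hlam : (n : ℝ) ^ 2 / (2 * n - 1) < lam) (a : ℕ → ℂ)
    (hsum : Summable (fun k : ℕ => ((k + 2 : ℕ) : ℝ) * ‖a (k + 2)‖))
    (hH : ∑' k : ℕ, ((k + 2 : ℕ) : ℝ) * ‖a (k + 2)‖ ≤ 1)
    (heq : ‖(lam : ℂ) * (a n) ^ 2 - a (2 * n - 1)‖ = lam / (n : ℝ) ^ 2) :
    ∃ α : ℂ, ‖α‖ = 1 ∧ a n = α / n ∧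
      ∀ k : ℕ, 2 ≤ k → k ≠ n → a k = 0 := by
  have hN : (2 : ℝ) ≤ n := by exact_mod_cast hn
  have hlam' : (n : ℝ) ^ 2 < lam * (2 * n - 1) := (div_lt_iff₀ (by linarith)).mp hlam
  have hlam_pos : 0 < lam := by nlinarith
  have hbudget : (n : ℝ) * ‖a n‖ + (2 * n - 1) * ‖a (2 * n - 1)‖ ≤ 1 := by
    have h := mul_norm_add_mul_norm_le_tsum hsum hn (m := 2 * n - 1) (by omega) (by omega)
    have h2n : ((2 * n - 1 : ℕ) : ℝ) = 2 * n - 1 := by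
      rw [Nat.cast_sub (by omega)]
      push_cast
      ring
    rw [h2n] at h
    exact h.trans hH
  have hlow : lam / (n : ℝ) ^ 2 ≤ lam * ‖a n‖ ^ 2 + ‖a (2 * n - 1)‖ := by
    calc lam / (n : ℝ) ^ 2 = ‖(lam : ℂ) * (a n) ^ 2 - a (2 * n - 1)‖ := heq.symm
      _ ≤ ‖(lam : ℂ) * (a n) ^ 2‖ + ‖a (2 * n - 1)‖ := norm_sub_le _ _
      _ = lam * ‖a n‖ ^ 2 + ‖a (2 * n - 1)‖ := by
        rw [norm_mul, norm_pow, Complex.norm_real, Real.norm_of_nonneg hlam_pos.le]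
  have hextremal := mul_eq_one_of_le_mul_sq_add (by linarith) hlam' (norm_nonneg _)
    (norm_nonneg _) hbudget hlow
  refine ⟨n * a n, by rwa [norm_mul, Complex.norm_natCast], ?_, fun k hk hkn => ?_⟩
  · rw [mul_div_cancel_left₀ _ (by exact_mod_cast (by omega : n ≠ 0))]
  · have h := (mul_norm_add_mul_norm_le_tsum hsum hn hk (Ne.symm hkn)).trans hH
    rw [hextremal] at h
    have hk_pos : (0 : ℝ) < k := by positivity
    exact norm_le_zero_iff.mp (nonpos_of_mul_nonpos_left (by linarith) hk_pos)
end

section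
/- Let μ be a probability measure on [0, 2π], n ≥ 2, and 0 < λ ≤ 2. Define a_k = ∫₀^{2π} e^{i(k-1)θ} dμ(θ) for k ≥ 2. Then |λ·a_n² − a_{2n-1}| ≤ 1. -/
/-!
Write `e(θ) = exp(i(n-1)θ)`, so that `a_n = ∫ e` and `a_{2n-1} = ∫ e²`, and put `c = ∫ e`.
Then `λ a_n² - a_{2n-1} = (λ - 1) c² - ∫ (e - c)²`. Since `|e| = 1`, the "complex variance"
satisfies `|∫ (e - c)²| ≤ ∫ |e - c|² = 1 - |c|²`, and `|λ - 1| ≤ 1` gives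
`|λ a_n² - a_{2n-1}| ≤ |c|² + 1 - |c|² = 1`.
-/

open MeasureTheory Real

namespace MeasureTheory

variable {α : Type*} [MeasurableSpace α] {μ : Measure α} [IsProbabilityMeasure μ]

theorem integral_sub_integral_sq {𝕜 : Type*} [RCLike 𝕜] {g : α → 𝕜} (hg : MemLp g 2 μ) :
    ∫ x, (g x - ∫ y, g y ∂μ) ^ 2 ∂μ = ∫ x, g x ^ 2 ∂μ - (∫ x, g x ∂μ) ^ 2 := by
  set c := ∫ x, g x ∂μ
  have hg_int : Integrable g μ := hg.integrable one_le_two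
  have hg_sq_int : Integrable (fun x => g x ^ 2) μ := by
    refine ((memLp_two_iff_integrable_sq_norm hg.1).1 hg).mono' (hg.1.pow 2) ?_
    exact ae_of_all _ fun x => (norm_pow (g x) 2).le
  calc ∫ x, (g x - c) ^ 2 ∂μ = ∫ x, (g x ^ 2 - 2 * c * g x) + c ^ 2 ∂μ := by
        congr 1; ext x; ring
    _ = ∫ x, g x ^ 2 ∂μ - c ^ 2 := by
        rw [integral_add (f := fun x => g x ^ 2 - 2 * c * g x)
            (hg_sq_int.sub (hg_int.const_mul _)) (integrable_const _),
          integral_sub hg_sq_int (hg_int.const_mul _), integral_const_mul]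
        simp only [integral_const, probReal_univ, one_smul]
        ring

theorem integral_norm_sub_integral_sq {E : Type*} [NormedAddCommGroup E] [InnerProductSpace ℝ E]
    [CompleteSpace E] {g : α → E} (hg : MemLp g 2 μ) :
    ∫ x, ‖g x - ∫ y, g y ∂μ‖ ^ 2 ∂μ = ∫ x, ‖g x‖ ^ 2 ∂μ - ‖∫ x, g x ∂μ‖ ^ 2 := by
  set c := ∫ x, g x ∂μ with hc
  have hg_int : Integrable g μ := hg.integrable one_le_two
  have hg_sq_int : Integrable (fun x => ‖g x‖ ^ 2) μ :=
    (memLp_two_iff_integrable_sq_norm hg.1).1 hg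
  have h_inner_int : Integrable (fun x => 2 * inner ℝ c (g x)) μ :=
    (hg_int.const_inner c).const_mul 2
  calc ∫ x, ‖g x - c‖ ^ 2 ∂μ = ∫ x, (‖g x‖ ^ 2 - 2 * inner ℝ c (g x)) + ‖c‖ ^ 2 ∂μ := by
        congr 1; ext x; rw [norm_sub_sq_real, real_inner_comm]
    _ = ∫ x, ‖g x‖ ^ 2 ∂μ - ‖c‖ ^ 2 := by
        rw [integral_add (f := fun x => ‖g x‖ ^ 2 - 2 * inner ℝ c (g x))
            (hg_sq_int.sub h_inner_int) (integrable_const _),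
          integral_sub hg_sq_int h_inner_int, integral_const_mul, integral_inner hg_int, ← hc,
          real_inner_self_eq_norm_sq]
        simp only [integral_const, probReal_univ, one_smul]
        ring

theorem norm_mul_integral_sq_sub_integral_sq_le {g : α → ℂ} (hg : AEStronglyMeasurable g μ)
    (hg_norm : ∀ᵐ x ∂μ, ‖g x‖ = 1) {w : ℂ} (hw : ‖w - 1‖ ≤ 1) :
    ‖w * (∫ x, g x ∂μ) ^ 2 - ∫ x, g x ^ 2 ∂μ‖ ≤ 1 := by
  set c := ∫ x, g x ∂μ with hc
  have hg_L2 : MemLp g 2 μ := MemLp.of_bound hg 1 (hg_norm.mono fun x hx => hx.le)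
  have h_var : ‖∫ x, (g x - c) ^ 2 ∂μ‖ ≤ 1 - ‖c‖ ^ 2 :=
    calc ‖∫ x, (g x - c) ^ 2 ∂μ‖ ≤ ∫ x, ‖(g x - c) ^ 2‖ ∂μ := norm_integral_le_integral_norm _
      _ = ∫ x, ‖g x - c‖ ^ 2 ∂μ := by simp_rw [norm_pow]
      _ = 1 - ‖c‖ ^ 2 := by
          have h_one : (fun x => ‖g x‖ ^ 2) =ᵐ[μ] fun _ => 1 :=
            hg_norm.mono fun x hx => by simp only [hx, one_pow]
          rw [integral_norm_sub_integral_sq hg_L2, integral_congr_ae h_one, ← hc]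
          simp
  calc ‖w * c ^ 2 - ∫ x, g x ^ 2 ∂μ‖ = ‖(w - 1) * c ^ 2 - ∫ x, (g x - c) ^ 2 ∂μ‖ := by
        rw [integral_sub_integral_sq hg_L2, ← hc]; ring_nf
    _ ≤ ‖w - 1‖ * ‖c‖ ^ 2 + (1 - ‖c‖ ^ 2) := by
        grw [norm_sub_le, norm_mul, norm_pow, h_var]
    _ ≤ 1 := by nlinarith [mul_le_of_le_one_left (sq_nonneg ‖c‖) hw]

end MeasureTheory

theorem zalcman_stmt_7_general (μ : Measure ℝ) [IsProbabilityMeasure μ]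
    (n : ℕ) (hn : 2 ≤ n) (lam : ℝ) (hlam : 0 < lam) (hlam' : lam ≤ 2)
    (a : ℕ → ℂ)
    (ha : ∀ k : ℕ, 2 ≤ k → a k = ∫ θ, Complex.exp (Complex.I * ((k : ℂ) - 1) * (θ : ℂ)) ∂μ) :
    ‖(lam : ℂ) * (a n) ^ 2 - a (2 * n - 1)‖ ≤ 1 := by
  set e : ℝ → ℂ := fun θ => Complex.exp (Complex.I * ((n : ℂ) - 1) * θ)
  have h_odd : a (2 * n - 1) = ∫ θ, e θ ^ 2 ∂μ := by
    have h_exp : ((2 * n - 1 : ℕ) : ℂ) - 1 = 2 * ((n : ℂ) - 1) := by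
      push_cast [Nat.cast_sub (by omega : 1 ≤ 2 * n)]; ring
    rw [ha _ (by omega), h_exp]
    refine integral_congr_ae (ae_of_all _ fun θ => ?_)
    simp only [e, ← Complex.exp_nat_mul]
    push_cast; ring_nf
  have h_norm : ∀ θ, ‖e θ‖ = 1 := fun θ => by
    simp [e, Complex.norm_exp]
  have h_lam : ‖(lam : ℂ) - 1‖ ≤ 1 := by
    rw [← Complex.ofReal_one, ← Complex.ofReal_sub, Complex.norm_real, Real.norm_eq_abs, abs_le]
    constructor <;> linarith
  rw [ha n hn, h_odd]
  exact norm_mul_integral_sq_sub_integral_sq_le (by fun_prop) (ae_of_all _ h_norm) h_lam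

theorem zalcman_stmt_7 (μ : Measure ℝ) [IsProbabilityMeasure μ]
    (hsupp : μ (Set.Icc (0 : ℝ) (2 * π))ᶜ = 0)
    (n : ℕ) (hn : 2 ≤ n) (lam : ℝ) (hlam : 0 < lam) (hlam' : lam ≤ 2)
    (a : ℕ → ℂ)
    (ha : ∀ k : ℕ, 2 ≤ k → a k = ∫ θ, Complex.exp (Complex.I * ((k : ℂ) - 1) * (θ : ℂ)) ∂μ) :
    ‖(lam : ℂ) * (a n) ^ 2 - a (2 * n - 1)‖ ≤ 1 :=
  zalcman_stmt_7_general μ n hn lam hlam hlam' a ha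
end

section
/- Let θ_k = (2k+1)π/(2n−2) for k = 1, …, 2n−2 with n ≥ 2, and let m_k ≥ 0 satisfy Σ_{k=1}^{n-1} m_{2k} = Σ_{k=1}^{n-1} m_{2k−1} = 1/2. Define a_j = Σ_{k=1}^{2n-2} m_k e^{i(j−1)θ_k}. Then for any λ ∈ ℝ, |λ·a_n² − a_{2n-1}| = 1. -/
open Real

/-!
At the nodes `θ_k = (2k+3)π/(2n-2)` (indexing from `k = 0`) the phase `(n-1)θ_k` is an odd
multiple of `π/2` and `(2n-2)θ_k` an odd multiple of `π`. Hence `a_{2n-1} = -∑ m_k = -1`, while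
`a_n = i ∑ (-1)^(k+1) m_{k+1}` is `i` times the difference of the even- and odd-indexed masses,
which is `0`. So `λ a_n² - a_{2n-1} = 1` for every `λ`.
-/

lemma Finset.sum_range_two_mul_eq_sum_even_add_sum_odd {M : Type*} [AddCommMonoid M]
    (N : ℕ) (f : ℕ → M) :
    ∑ k ∈ Finset.range (2 * N), f k
      = ∑ k ∈ Finset.range N, f (2 * k) + ∑ k ∈ Finset.range N, f (2 * k + 1) := by
  induction N with
  | zero => simp
  | succ N ih =>
    rw [Nat.mul_succ, Finset.sum_range_succ, Finset.sum_range_succ, ih,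
      Finset.sum_range_succ, Finset.sum_range_succ]
    abel

namespace Complex

lemma exp_odd_mul_pi_mul_I (k : ℕ) : exp ((2 * k + 1 : ℕ) * (π * I)) = -1 := by
  rw [exp_nat_mul, exp_pi_mul_I, Odd.neg_one_pow ⟨k, rfl⟩]

lemma exp_odd_mul_pi_div_two_mul_I (k : ℕ) :
    exp ((2 * k + 1 : ℕ) * (π / 2 * I)) = (-1) ^ k * I := by
  rw [exp_nat_mul, exp_pi_div_two_mul_I, pow_succ, pow_mul, I_sq]

end Complex

section Nodes

open Complex

variable {n : ℕ} (hn : 2 ≤ n) (k : ℕ)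
include hn

lemma sub_one_mul_node :
    ((n : ℂ) - 1) * (((2 * ((k : ℝ) + 1) + 1) * π / (2 * (n : ℝ) - 2) : ℝ) : ℂ)
      = (2 * (k + 1) + 1 : ℕ) * (π / 2) := by
  have hn1 : (n : ℂ) - 1 ≠ 0 := sub_ne_zero.mpr (by exact_mod_cast (by omega : n ≠ 1))
  push_cast
  field_simp

lemma exp_sub_one_mul_node :
    exp (I * ((n : ℂ) - 1) * (((2 * ((k : ℝ) + 1) + 1) * π / (2 * (n : ℝ) - 2) : ℝ) : ℂ))
      = (-1) ^ (k + 1) * I := by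
  rw [mul_assoc, sub_one_mul_node hn, ← exp_odd_mul_pi_div_two_mul_I]
  ring_nf

lemma exp_two_mul_sub_one_mul_node :
    exp (I * (((2 * n - 1 : ℕ) : ℂ) - 1) *
        (((2 * ((k : ℝ) + 1) + 1) * π / (2 * (n : ℝ) - 2) : ℝ) : ℂ)) = -1 := by
  have h : ((2 * n - 1 : ℕ) : ℂ) - 1 = 2 * ((n : ℂ) - 1) := by
    rw [Nat.cast_sub (by omega)]
    push_cast
    ring
  rw [h, show ∀ z : ℂ, I * (2 * ((n : ℂ) - 1)) * z = 2 * (((n : ℂ) - 1) * z) * I from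
      fun z => by ring,
    sub_one_mul_node hn, ← exp_odd_mul_pi_mul_I (k + 1)]
  ring_nf

end Nodes

theorem zalcman_stmt_15_general (n : ℕ) (hn : 2 ≤ n) (m : ℕ → ℝ)
    (heven : ∑ k ∈ Finset.range (n - 1), m (2 * (k + 1)) = 1 / 2)
    (hodd : ∑ k ∈ Finset.range (n - 1), m (2 * k + 1) = 1 / 2)
    (a : ℕ → ℂ)
    (ha : ∀ j : ℕ, a j = ∑ k ∈ Finset.range (2 * n - 2),
      (m (k + 1) : ℂ) * Complex.exp (Complex.I * ((j : ℂ) - 1) *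
        (((2 * ((k : ℝ) + 1) + 1) * π / (2 * (n : ℝ) - 2) : ℝ) : ℂ)))
    (lam : ℝ) :
    ‖(lam : ℂ) * (a n) ^ 2 - a (2 * n - 1)‖ = 1 := by
  have heven' : ∑ k ∈ Finset.range (n - 1), (m (2 * (k + 1)) : ℂ) = 1 / 2 := by
    simpa using congrArg ((↑) : ℝ → ℂ) heven
  have hodd' : ∑ k ∈ Finset.range (n - 1), (m (2 * k + 1) : ℂ) = 1 / 2 := by
    simpa using congrArg ((↑) : ℝ → ℂ) hodd
  have hsplit (c : ℕ → ℂ) : ∑ k ∈ Finset.range (2 * n - 2), (m (k + 1) : ℂ) * c k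
      = ∑ k ∈ Finset.range (n - 1), (m (2 * k + 1) : ℂ) * c (2 * k)
        + ∑ k ∈ Finset.range (n - 1), (m (2 * (k + 1)) : ℂ) * c (2 * k + 1) := by
    rw [show 2 * n - 2 = 2 * (n - 1) by omega, Finset.sum_range_two_mul_eq_sum_even_add_sum_odd]
    rfl
  have han : a n = 0 := by
    rw [ha, hsplit]
    simp only [exp_sub_one_mul_node hn, pow_succ, pow_mul]
    simp [← Finset.sum_mul, heven', hodd']
  have ha2n : a (2 * n - 1) = -1 := by
    rw [ha, hsplit]
    simp only [exp_two_mul_sub_one_mul_node hn, mul_neg_one, Finset.sum_neg_distrib]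
    rw [heven', hodd']
    norm_num
  simp [han, ha2n]

theorem zalcman_stmt_15 (n : ℕ) (hn : 2 ≤ n) (m : ℕ → ℝ)
    (hm : ∀ k, 0 ≤ m k)
    (heven : ∑ k ∈ Finset.range (n - 1), m (2 * (k + 1)) = 1 / 2)
    (hodd : ∑ k ∈ Finset.range (n - 1), m (2 * k + 1) = 1 / 2)
    (a : ℕ → ℂ)
    (ha : ∀ j : ℕ, a j = ∑ k ∈ Finset.range (2 * n - 2),
      (m (k + 1) : ℂ) * Complex.exp (Complex.I * ((j : ℂ) - 1) *
        (((2 * ((k : ℝ) + 1) + 1) * π / (2 * (n : ℝ) - 2) : ℝ) : ℂ)))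
    (lam : ℝ) :
    ‖(lam : ℂ) * (a n) ^ 2 - a (2 * n - 1)‖ = 1 :=
  zalcman_stmt_15_general n hn m heven hodd a ha lam
end

section
/- Let n ≥ 2 and let α be a complex number with |α| = 1. The function f(z) = z + (α/(2n−1)) z^{2n−1} satisfies Σ_{k≥2} k|a_k| ≤ 1, and for every λ with 0 < λ ≤ n²/(2n−1), |λ·a_n² − a_{2n−1}| = 1/(2n−1) = max(λ/n², 1/(2n−1)). -/
/-! Since `n ≠ 2n-1` for `n ≥ 2`, the only nonzero coefficient is `a (2n-1)` and `a n = 0`, so the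
functional reduces to `‖a (2n-1)‖ = 1/(2n-1)` and the weighted coefficient sum is exactly `1`.
The bound `λ ≤ n²/(2n-1)` is precisely `λ/n² ≤ 1/(2n-1)`. -/

lemma tsum_natCast_add_two_mul_norm_ite {E : Type*} [SeminormedAddCommGroup E] {m : ℕ}
    (hm : 2 ≤ m) (c : E) :
    ∑' k : ℕ, ((k + 2 : ℕ) : ℝ) * ‖if k + 2 = m then c else 0‖ = m * ‖c‖ := by
  rw [tsum_eq_single (m - 2) fun k hk => by rw [if_neg (by omega), norm_zero, mul_zero]]
  rw [Nat.sub_add_cancel hm, if_pos rfl]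

lemma div_le_one_div_of_le_div {a b c : ℝ} (hb : 0 < b) (hc : 0 < c) (h : a ≤ b / c) :
    a / b ≤ 1 / c := by
  rw [div_le_div_iff₀ hb hc, one_mul]
  rwa [le_div_iff₀ hc] at h

theorem zalcman_stmt_17 (n : ℕ) (hn : 2 ≤ n) (α : ℂ) (hα : ‖α‖ = 1)
    (a : ℕ → ℂ) (ha : ∀ k : ℕ, a k = if k = 2 * n - 1 then α / (2 * (n : ℂ) - 1) else 0) :
    (∑' k : ℕ, ((k + 2 : ℕ) : ℝ) * ‖a (k + 2)‖) ≤ 1 ∧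
      ∀ lam : ℝ, 0 < lam → lam ≤ (n : ℝ) ^ 2 / (2 * n - 1) →
        ‖(lam : ℂ) * (a n) ^ 2 - a (2 * n - 1)‖ = 1 / (2 * (n : ℝ) - 1) ∧
          (1 / (2 * (n : ℝ) - 1) = max (lam / (n : ℝ) ^ 2) (1 / (2 * (n : ℝ) - 1))) := by
  have hpos : (0 : ℝ) < 2 * n - 1 := by
    have : (2 : ℝ) ≤ n := by exact_mod_cast hn
    linarith
  have hcast : ((2 * n - 1 : ℕ) : ℝ) = 2 * n - 1 := by
    rw [Nat.cast_sub (by omega)]; push_cast; ring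
  have hcoef : ‖α / (2 * (n : ℂ) - 1)‖ = 1 / (2 * (n : ℝ) - 1) := by
    have hcastC : ((2 * n - 1 : ℕ) : ℂ) = 2 * n - 1 := by
      exact_mod_cast congrArg Complex.ofReal hcast
    rw [norm_div, hα, ← hcastC, Complex.norm_natCast, hcast]
  have han : a n = 0 := by rw [ha, if_neg (by omega)]
  refine ⟨?_, fun lam hlam hle => ⟨?_, ?_⟩⟩
  · simp only [ha]
    rw [tsum_natCast_add_two_mul_norm_ite (by omega), hcoef, hcast, mul_one_div_cancel hpos.ne']
  · rw [han, ha, if_pos rfl, zero_pow two_ne_zero, mul_zero, zero_sub, norm_neg, hcoef]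
  · exact (max_eq_right (div_le_one_div_of_le_div (by positivity) hpos hle)).symm
end

section
/- Let n ≥ 2 and let α be a complex number with |α| = 1. The function f(z) = z + (α/n) z^n satisfies Σ_{k≥2} k|a_k| ≤ 1, and for every λ ≥ n²/(2n−1), |λ·a_n² − a_{2n−1}| = λ/n² = max(λ/n², 1/(2n−1)). -/
theorem tsum_natCast_mul_norm_shift_of_eq_ite {E : Type*} [SeminormedAddCommGroup E]
    {m n : ℕ} (hmn : m ≤ n) (c : E) (a : ℕ → E) (ha : ∀ k, a k = if k = n then c else 0) :
    ∑' k : ℕ, ((k + m : ℕ) : ℝ) * ‖a (k + m)‖ = n * ‖c‖ := by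
  rw [tsum_eq_single (n - m) fun k hk => by simp [ha, show k + m ≠ n by omega],
    Nat.sub_add_cancel hmn, ha, if_pos rfl]

theorem one_div_le_div_sq_of_sq_div_le {x lam : ℝ} (hx : 0 < 2 * x - 1)
    (hlam : x ^ 2 / (2 * x - 1) ≤ lam) : 1 / (2 * x - 1) ≤ lam / x ^ 2 := by
  have hx0 : 0 < x ^ 2 := by nlinarith
  rw [div_le_div_iff₀ hx hx0, one_mul]
  rwa [div_le_iff₀ hx] at hlam

theorem zalcman_stmt_18 (n : ℕ) (hn : 2 ≤ n) (α : ℂ) (hα : ‖α‖ = 1)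
    (a : ℕ → ℂ) (ha : ∀ k : ℕ, a k = if k = n then α / (n : ℂ) else 0) :
    (∑' k : ℕ, ((k + 2 : ℕ) : ℝ) * ‖a (k + 2)‖) ≤ 1 ∧
      ∀ lam : ℝ, (n : ℝ) ^ 2 / (2 * n - 1) ≤ lam →
        ‖(lam : ℂ) * (a n) ^ 2 - a (2 * n - 1)‖ = lam / (n : ℝ) ^ 2 ∧
          (lam / (n : ℝ) ^ 2 = max (lam / (n : ℝ) ^ 2) (1 / (2 * (n : ℝ) - 1))) := by
  have hn_pos : (0 : ℝ) < n := by positivity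
  have h2n1 : (0 : ℝ) < 2 * n - 1 := by
    have : (2 : ℝ) ≤ n := by exact_mod_cast hn
    linarith
  have hcoeff : ‖α / (n : ℂ)‖ = 1 / n := by rw [norm_div, hα, Complex.norm_natCast]
  refine ⟨?_, fun lam hlam => ⟨?_, ?_⟩⟩
  · rw [tsum_natCast_mul_norm_shift_of_eq_ite hn _ a ha, hcoeff, mul_one_div_cancel hn_pos.ne']
  · have hlam0 : 0 ≤ lam := (div_pos (by positivity) h2n1).le.trans hlam
    rw [ha n, if_pos rfl, ha (2 * n - 1), if_neg (by omega), sub_zero, norm_mul, norm_pow,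
      hcoeff, Complex.norm_real, Real.norm_of_nonneg hlam0]
    ring
  · exact (max_eq_left (one_div_le_div_sq_of_sq_div_le h2n1 hlam)).symm
end
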